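/- Let γ ∈ [0,1), let μ₀ be a probability distribution on S, let T be a transition kernel from S × A to S, let r : S × A → ℝ with |r(s,a)| ≤ r_max for all (s,a), and let π and π̂ be policies on (S, A) with max_{s∈S} D_TV(π(·|s) ‖ π̂(·|s)) ≤ ε_π. Let (P_t) and (P̂_t) be the state-action occupancies generated from initial distribution μ₀ by the same kernel T under policies π and π̂ respectively, and let J(π) = ∑_{t=0}^∞ γ^t ∑_{s,a} P_t(s,a)·r(s,a) and J(π̂) = ∑_{t=0}^∞ γ^t ∑_{s,a} P̂_t(s,a)·r(s,a). Then |J(π) − J(π̂)| ≤ 2·r_max·∑_{t=0}^∞ γ^t·(t+1)·ε_π = 2·r_max·ε_π/(1−γ)². -/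

import Mathlib

/-! The occupancy `P_{t+1}` is obtained from `P_t` by pushing it through `T` and then attaching
the policy. Pushing through a stochastic matrix does not increase the `ℓ¹` norm, and, writing
`ν ⊗ π` for `(s, a) ↦ ν s * π s a`, `ν ⊗ π - ν' ⊗ π' = (ν - ν') ⊗ π + ν' ⊗ (π - π')`, so the `ℓ¹` distance between the two occupancies
grows by at most `2 ε_π` per step: `‖P_t - P̂_t‖₁ ≤ 2 (t + 1) ε_π`. Pairing with `r` costs a factor
`r_max`, and `∑ γ^t (t + 1) = 1 / (1 - γ)²`. -/

open Finset

/-- Total-variation distance between two functions on a finite type. -/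
noncomputable def tv {X : Type*} [Fintype X] (p q : X → ℝ) : ℝ :=
  (1 / 2) * ∑ x, |p x - q x|

open Matrix

section StochasticMatrix

variable {X Y : Type*} [Fintype X] [Fintype Y]

theorem sum_abs_vecMul_le (K : Matrix X Y ℝ) (hK : ∀ x, K x ∈ stdSimplex ℝ Y) (f : X → ℝ) :
    ∑ y, |(f ᵥ* K) y| ≤ ∑ x, |f x| :=
  calc ∑ y, |(f ᵥ* K) y| ≤ ∑ y, ∑ x, |f x| * K x y := by
        refine sum_le_sum fun y _ => (abs_sum_le_sum_abs _ _).trans_eq ?_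
        simp only [abs_mul, abs_of_nonneg ((hK _).1 y)]
    _ = ∑ x, |f x| := by
        rw [sum_comm]
        simp only [← mul_sum, (hK _).2, mul_one]

theorem abs_dotProduct_le (f r : X → ℝ) {C : ℝ} (hr : ∀ x, |r x| ≤ C) :
    |f ⬝ᵥ r| ≤ (∑ x, |f x|) * C :=
  calc |f ⬝ᵥ r| ≤ ∑ x, |f x| * |r x| := (abs_sum_le_sum_abs _ _).trans_eq (by simp [abs_mul])
    _ ≤ ∑ x, |f x| * C := sum_le_sum fun x _ => mul_le_mul_of_nonneg_left (hr x) (abs_nonneg _)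
    _ = (∑ x, |f x|) * C := (sum_mul _ _ _).symm

end StochasticMatrix

section Occupancy

variable {S A : Type*} [Fintype S] [Fintype A]

def stateAction (ν : S → ℝ) (π : S → A → ℝ) : S × A → ℝ := fun x => ν x.1 * π x.1 x.2

noncomputable def occupancy (μ0 : S → ℝ) (T : Matrix (S × A) S ℝ) (π : S → A → ℝ) :
    ℕ → S × A → ℝ
  | 0 => stateAction μ0 π
  | t + 1 => stateAction (occupancy μ0 T π t ᵥ* T) π

theorem sum_abs_stateAction (ν : S → ℝ) (g : S → A → ℝ) :
    ∑ x, |stateAction ν g x| = ∑ s, |ν s| * ∑ a, |g s a| := by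
  simp only [stateAction, Fintype.sum_prod_type, abs_mul, mul_sum]

theorem sum_abs_stateAction_of_mem_stdSimplex (ν : S → ℝ) {π : S → A → ℝ}
    (hπ : ∀ s, π s ∈ stdSimplex ℝ A) : ∑ x, |stateAction ν π x| = ∑ s, |ν s| := by
  rw [sum_abs_stateAction]
  refine sum_congr rfl fun s _ => ?_
  rw [sum_congr rfl fun a _ => abs_of_nonneg ((hπ s).1 a), (hπ s).2, mul_one]

theorem sum_abs_stateAction_sub_le (ν ν' : S → ℝ) {π π' : S → A → ℝ}
    (hπ : ∀ s, π s ∈ stdSimplex ℝ A) {δ : ℝ} (hδ : ∀ s, ∑ a, |π s a - π' s a| ≤ δ) :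
    ∑ x, |stateAction ν π x - stateAction ν' π' x|
      ≤ ∑ s, |ν s - ν' s| + (∑ s, |ν' s|) * δ := by
  have hsplit : ∀ x, stateAction ν π x - stateAction ν' π' x
      = stateAction (ν - ν') π x + stateAction ν' (π - π') x := fun x => by
    simp only [stateAction, Pi.sub_apply]; ring
  calc ∑ x, |stateAction ν π x - stateAction ν' π' x|
      ≤ ∑ x, |stateAction (ν - ν') π x| + ∑ x, |stateAction ν' (π - π') x| := by
        rw [← sum_add_distrib]
        exact sum_le_sum fun x _ => (hsplit x).symm ▸ abs_add_le _ _
    _ ≤ ∑ s, |ν s - ν' s| + ∑ s, |ν' s| * δ := by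
        rw [sum_abs_stateAction_of_mem_stdSimplex _ hπ, sum_abs_stateAction]
        exact add_le_add le_rfl
          (sum_le_sum fun s _ => mul_le_mul_of_nonneg_left (hδ s) (abs_nonneg _))
    _ = ∑ s, |ν s - ν' s| + (∑ s, |ν' s|) * δ := by rw [sum_mul]

theorem eq_occupancy {μ0 : S → ℝ} {T : Matrix (S × A) S ℝ} {π : S → A → ℝ}
    {P : ℕ → S × A → ℝ} (hP0 : ∀ sa : S × A, P 0 sa = μ0 sa.1 * π sa.1 sa.2)
    (hPrec : ∀ t (x : S × A), P (t + 1) x = ∑ sa : S × A, P t sa * T sa x.1 * π x.1 x.2) :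
    P = occupancy μ0 T π := by
  funext t x
  induction t generalizing x with
  | zero => simp only [hP0, occupancy, stateAction]
  | succ t ih =>
    simp only [hPrec, occupancy, stateAction, Matrix.vecMul, dotProduct, sum_mul, ih]

variable (μ0 : S → ℝ) {T : Matrix (S × A) S ℝ} (hT : ∀ sa, T sa ∈ stdSimplex ℝ S)
  {π π' : S → A → ℝ} (hπ : ∀ s, π s ∈ stdSimplex ℝ A)
include hT hπ

theorem sum_abs_occupancy_le (t : ℕ) : ∑ x, |occupancy μ0 T π t x| ≤ ∑ s, |μ0 s| := by
  induction t with
  | zero => rw [occupancy]; exact (sum_abs_stateAction_of_mem_stdSimplex μ0 hπ).le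
  | succ t ih =>
    rw [occupancy, sum_abs_stateAction_of_mem_stdSimplex _ hπ]
    exact (sum_abs_vecMul_le T hT _).trans ih

theorem sum_abs_occupancy_sub_le (hπ' : ∀ s, π' s ∈ stdSimplex ℝ A) {δ : ℝ} (hδ0 : 0 ≤ δ)
    (hδ : ∀ s, ∑ a, |π s a - π' s a| ≤ δ) (t : ℕ) :
    ∑ x, |occupancy μ0 T π t x - occupancy μ0 T π' t x| ≤ (t + 1) * (∑ s, |μ0 s|) * δ := by
  induction t with
  | zero => simpa [occupancy] using sum_abs_stateAction_sub_le μ0 μ0 hπ hδ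
  | succ t ih =>
    simp only [occupancy]
    refine (sum_abs_stateAction_sub_le _ _ hπ hδ).trans ?_
    have hdiff : ∑ s, |(occupancy μ0 T π t ᵥ* T) s - (occupancy μ0 T π' t ᵥ* T) s|
        ≤ (t + 1) * (∑ s, |μ0 s|) * δ := by
      have h := sum_abs_vecMul_le T hT (occupancy μ0 T π t - occupancy μ0 T π' t)
      rw [Matrix.sub_vecMul] at h
      exact h.trans ih
    have hmass : ∑ s, |(occupancy μ0 T π' t ᵥ* T) s| ≤ ∑ s, |μ0 s| :=
      (sum_abs_vecMul_le T hT _).trans (sum_abs_occupancy_le μ0 hT hπ' t)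
    have hpolicy := mul_le_mul_of_nonneg_right hmass hδ0
    push_cast
    linarith

theorem abs_occupancy_dotProduct_sub_le (hπ' : ∀ s, π' s ∈ stdSimplex ℝ A) {δ : ℝ}
    (hδ0 : 0 ≤ δ) (hδ : ∀ s, ∑ a, |π s a - π' s a| ≤ δ) {r : S × A → ℝ} {C : ℝ}
    (hr : ∀ x, |r x| ≤ C) (hC : 0 ≤ C) (t : ℕ) :
    |occupancy μ0 T π t ⬝ᵥ r - occupancy μ0 T π' t ⬝ᵥ r| ≤ (t + 1) * (∑ s, |μ0 s|) * δ * C := by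
  rw [← sub_dotProduct]
  exact (abs_dotProduct_le _ r hr).trans
    (mul_le_mul_of_nonneg_right (sum_abs_occupancy_sub_le μ0 hT hπ hπ' hδ0 hδ t) hC)

end Occupancy

section Discounting

theorem hasSum_pow_mul_succ {γ : ℝ} (hγ0 : 0 ≤ γ) (hγ1 : γ < 1) :
    HasSum (fun t : ℕ => γ ^ t * (t + 1)) (1 / (1 - γ) ^ 2) := by
  have h := hasSum_choose_mul_geometric_of_norm_lt_one 1
    (by rwa [Real.norm_of_nonneg hγ0] : ‖γ‖ < 1)
  simpa [mul_comm] using h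

theorem summable_pow_mul_of_abs_le {γ : ℝ} (hγ0 : 0 ≤ γ) (hγ1 : γ < 1) {a : ℕ → ℝ} {C : ℝ}
    (ha : ∀ t, |a t| ≤ C) : Summable fun t => γ ^ t * a t :=
  ((summable_geometric_of_lt_one hγ0 hγ1).mul_right C).of_norm_bounded fun t => by
    rw [Real.norm_eq_abs, abs_mul, abs_pow, abs_of_nonneg hγ0]
    exact mul_le_mul_of_nonneg_left (ha t) (pow_nonneg hγ0 t)

theorem abs_tsum_sub_tsum_le {a b c : ℕ → ℝ} (ha : Summable a) (hb : Summable b)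
    (hc : Summable c) (h : ∀ t, |a t - b t| ≤ c t) : |∑' t, a t - ∑' t, b t| ≤ ∑' t, c t := by
  rw [← ha.tsum_sub hb]
  exact tsum_of_norm_bounded hc.hasSum fun t => (Real.norm_eq_abs _).trans_le (h t)

end Discounting

/-- Return gap between two policies under the same dynamics: bounded by
2·r_max·∑ γ^t·(t+1)·ε_π = 2·r_max·ε_π/(1−γ)². -/
theorem return_gap_policy_shift
    {S A : Type*} [Fintype S] [Fintype A] [Nonempty S] [Nonempty A]
    (γ : ℝ) (hγ0 : 0 ≤ γ) (hγ1 : γ < 1)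
    (μ0 : S → ℝ) (hμ0 : (∀ s, 0 ≤ μ0 s) ∧ ∑ s, μ0 s = 1)
    (T : S × A → S → ℝ)
    (hT : ∀ sa, (∀ s', 0 ≤ T sa s') ∧ ∑ s', T sa s' = 1)
    (r : S × A → ℝ) (rmax : ℝ) (hr : ∀ sa, |r sa| ≤ rmax)
    (π πhat : S → A → ℝ)
    (hπ : ∀ s, (∀ a, 0 ≤ π s a) ∧ ∑ a, π s a = 1)
    (hπhat : ∀ s, (∀ a, 0 ≤ πhat s a) ∧ ∑ a, πhat s a = 1)
    (επ : ℝ)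
    (hεπ : Finset.univ.sup' Finset.univ_nonempty (fun s => tv (π s) (πhat s)) ≤ επ)
    (P Phat : ℕ → S × A → ℝ)
    (hP0 : ∀ sa : S × A, P 0 sa = μ0 sa.1 * π sa.1 sa.2)
    (hPhat0 : ∀ sa : S × A, Phat 0 sa = μ0 sa.1 * πhat sa.1 sa.2)
    (hPrec : ∀ t (x : S × A),
      P (t + 1) x = ∑ sa : S × A, P t sa * T sa x.1 * π x.1 x.2)
    (hPhatrec : ∀ t (x : S × A),
      Phat (t + 1) x = ∑ sa : S × A, Phat t sa * T sa x.1 * πhat x.1 x.2) :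
    |(∑' t : ℕ, γ ^ t * ∑ sa : S × A, P t sa * r sa)
       - ∑' t : ℕ, γ ^ t * ∑ sa : S × A, Phat t sa * r sa|
      ≤ 2 * rmax * ∑' t : ℕ, γ ^ t * (t + 1) * επ
    ∧ 2 * rmax * ∑' t : ℕ, γ ^ t * (t + 1) * επ
      = 2 * rmax * επ / (1 - γ) ^ 2 := by
  obtain rfl := eq_occupancy hP0 hPrec
  obtain rfl := eq_occupancy hPhat0 hPhatrec
  have htv : ∀ s, tv (π s) (πhat s) ≤ επ := fun s =>
    (le_sup' (fun s => tv (π s) (πhat s)) (mem_univ s)).trans hεπ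
  have hδ : ∀ s, ∑ a, |π s a - πhat s a| ≤ 2 * επ := fun s => by
    have := htv s; unfold tv at this; linarith
  have hε : 0 ≤ επ :=
    (by unfold tv; positivity : 0 ≤ tv (π (Classical.arbitrary S)) _).trans (htv _)
  have hrmax : 0 ≤ rmax := (abs_nonneg _).trans (hr (Classical.arbitrary _))
  have hmass : ∑ s, |μ0 s| = 1 := by simp only [abs_of_nonneg (hμ0.1 _), hμ0.2]
  have hreturn : ∀ ρ : S → A → ℝ, (∀ s, ρ s ∈ stdSimplex ℝ A) →
      Summable fun t => γ ^ t * (occupancy μ0 T ρ t ⬝ᵥ r) := fun ρ hρ =>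
    summable_pow_mul_of_abs_le hγ0 hγ1 fun t => (abs_dotProduct_le _ r hr).trans
      (mul_le_mul_of_nonneg_right (sum_abs_occupancy_le μ0 hT hρ t) hrmax)
  have hgap : ∀ t : ℕ, |γ ^ t * (occupancy μ0 T π t ⬝ᵥ r) - γ ^ t * (occupancy μ0 T πhat t ⬝ᵥ r)|
      ≤ 2 * rmax * (γ ^ t * (t + 1) * επ) := fun t => by
    have h := abs_occupancy_dotProduct_sub_le μ0 hT hπ hπhat (by linarith) hδ hr hrmax t
    rw [hmass] at h
    rw [← mul_sub, abs_mul, abs_pow, abs_of_nonneg hγ0]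
    nlinarith [pow_nonneg hγ0 t]
  have hseries := hasSum_pow_mul_succ hγ0 hγ1
  refine ⟨?_, by rw [tsum_mul_right, hseries.tsum_eq]; ring⟩
  rw [← tsum_mul_left]
  exact abs_tsum_sub_tsum_le (hreturn π hπ) (hreturn πhat hπhat)
    ((hseries.summable.mul_right επ).mul_left _) hgap
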